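/- If 1/4 < ℓ' ≤ ℓ < 1/2, then there exists a constant C such that for all real a and c, ∫_ℝ dx / ((1+|x-a|)^{2ℓ} (1+|x-c|)^{2ℓ'}) ≤ C / (1+|a-c|)^{2ℓ+2ℓ'-1}. -/

import Mathlib

/-!
Split the line according to which of `a`, `c` is nearer to `x`. If `|x - c| ≤ |x - a|`, then
`1 + |x - a| ≥ max ((1 + |a - c|) / 2) (1 + |x - c|)`, so the integrand is dominated by a radial
profile around `c` that is at most `2 ^ p (1 + |a - c|) ^ (-p) (1 + |x - c|) ^ (-q)` near `c` and at
most `(1 + |x - c|) ^ (-(p + q))` beyond distance `|a - c|`. Since `q < 1 < p + q`, both pieces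
integrate to a multiple of `(1 + |a - c|) ^ (1 - p - q)`.
-/

open MeasureTheory Set Real

theorem setIntegral_Ioi_comp_add_right {E : Type*} [NormedAddCommGroup E] [NormedSpace ℝ E]
    (f : ℝ → E) (a d : ℝ) : ∫ x in Ioi a, f (x + d) = ∫ x in Ioi (a + d), f x := by
  have := (measurePreserving_add_right volume d).setIntegral_preimage_emb
    (measurableEmbedding_addRight d) f (Ioi (a + d))
  simpa [preimage_add_const_Ioi] using this

theorem integral_Ioi_one_add_rpow_neg {s D : ℝ} (hs : 1 < s) (hD : -1 < D) :
    ∫ t in Ioi D, (1 + t) ^ (-s) = (1 + D) ^ (1 - s) / (s - 1) := by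
  simp_rw [add_comm (1 : ℝ)]
  rw [setIntegral_Ioi_comp_add_right (fun t => t ^ (-s)),
    integral_Ioi_rpow_of_lt (by linarith) (by linarith), neg_add_eq_sub, ← neg_sub s 1,
    div_neg, neg_div, neg_neg]

theorem integral_Ioc_one_add_rpow_neg_le {q D : ℝ} (hq : q < 1) (hD : 0 ≤ D) :
    ∫ t in Ioc 0 D, (1 + t) ^ (-q) ≤ (1 + D) ^ (1 - q) / (1 - q) := by
  rw [← intervalIntegral.integral_of_le hD, intervalIntegral.integral_comp_add_left
    (fun t => t ^ (-q)), integral_rpow (Or.inl (by linarith)), add_zero, one_rpow,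
    show -q + 1 = 1 - q by ring]
  gcongr
  linarith

lemma integrable_one_add_abs_rpow_neg {s : ℝ} (hs : 1 < s) :
    Integrable (fun x : ℝ => (1 + |x|) ^ (-s)) :=
  integrable_one_add_norm (E := ℝ) (by simpa using hs)

noncomputable def decayProfile (p q D t : ℝ) : ℝ :=
  max ((1 + D) / 2) (1 + t) ^ (-p) * (1 + t) ^ (-q)

section decayProfile

variable {p q D t : ℝ}

lemma decayProfile_nonneg (p q : ℝ) (ht : 0 ≤ t) : 0 ≤ decayProfile p q D t := by
  have : 0 < max ((1 + D) / 2) (1 + t) := lt_max_of_lt_right (by linarith)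
  unfold decayProfile
  positivity

lemma decayProfile_le_rpow (hp : 0 ≤ p) (ht : 0 ≤ t) :
    decayProfile p q D t ≤ (1 + t) ^ (-(p + q)) := by
  rw [decayProfile, neg_add, rpow_add (by linarith)]
  exact mul_le_mul_of_nonneg_right
    (rpow_le_rpow_of_nonpos (by linarith) (le_max_right _ _) (by linarith))
    (rpow_nonneg (by linarith) _)

lemma decayProfile_le_of_nonneg (hp : 0 ≤ p) (hD : 0 ≤ D) (ht : 0 ≤ t) :
    decayProfile p q D t ≤ ((1 + D) / 2) ^ (-p) * (1 + t) ^ (-q) :=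
  mul_le_mul_of_nonneg_right
    (rpow_le_rpow_of_nonpos (by linarith) (le_max_left _ _) (by linarith))
    (rpow_nonneg (by linarith) _)

lemma one_div_rpow_mul_rpow_le_decayProfile (q : ℝ) (hp : 0 ≤ p) {y z : ℝ}
    (hzy : |z| ≤ |y|) :
    1 / ((1 + |y|) ^ p * (1 + |z|) ^ q) ≤ decayProfile p q |y - z| |z| := by
  have hmax : max ((1 + |y - z|) / 2) (1 + |z|) ≤ 1 + |y| :=
    max_le (by linarith [abs_sub y z]) (by linarith)
  rw [decayProfile, one_div, mul_inv, ← rpow_neg (by positivity), ← rpow_neg (by positivity)]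
  exact mul_le_mul_of_nonneg_right
    (rpow_le_rpow_of_nonpos (lt_max_of_lt_right (by positivity)) hmax (by linarith))
    (rpow_nonneg (by positivity) _)

lemma one_div_rpow_mul_rpow_le (hp : 0 ≤ p) (hq : 0 ≤ q) (y z : ℝ) :
    1 / ((1 + |y|) ^ p * (1 + |z|) ^ q) ≤
      decayProfile p q |y - z| |z| + decayProfile q p |y - z| |y| := by
  rcases le_total |z| |y| with h | h
  · linarith [one_div_rpow_mul_rpow_le_decayProfile q hp h,
      decayProfile_nonneg q p (D := |y - z|) (abs_nonneg y)]
  · have := one_div_rpow_mul_rpow_le_decayProfile p hq h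
    rw [mul_comm, abs_sub_comm] at this
    linarith [decayProfile_nonneg p q (D := |y - z|) (abs_nonneg z)]

lemma continuous_decayProfile_abs (p q D : ℝ) :
    Continuous (fun t => decayProfile p q D |t|) := by
  have h : ∀ t : ℝ, 0 < 1 + |t| := fun t => by positivity
  exact ((continuous_const.max (continuous_const.add continuous_abs)).rpow_const
    fun t => Or.inl (lt_max_of_lt_right (h t)).ne').mul
    ((continuous_const.add continuous_abs).rpow_const fun t => Or.inl (h t).ne')

lemma integrable_decayProfile_abs (D : ℝ) (hp : 0 ≤ p) (hpq : 1 < p + q) :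
    Integrable (fun x => decayProfile p q D |x|) :=
  (integrable_one_add_abs_rpow_neg hpq).mono'
    (continuous_decayProfile_abs p q D).aestronglyMeasurable
    (Filter.Eventually.of_forall fun x => by
      rw [Real.norm_of_nonneg (decayProfile_nonneg p q (abs_nonneg x))]
      exact decayProfile_le_rpow hp (abs_nonneg x))

lemma integral_decayProfile_abs_le (hp : 0 ≤ p) (hq : q < 1) (hpq : 1 < p + q) (hD : 0 ≤ D) :
    ∫ x, decayProfile p q D |x| ≤
      2 * (2 ^ p / (1 - q) + 1 / (p + q - 1)) / (1 + D) ^ (p + q - 1) := by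
  have hE : 0 < 1 + D := by linarith
  have hint : IntegrableOn (decayProfile p q D) (Ioi 0) :=
    (integrable_decayProfile_abs D hp hpq).integrableOn.congr_fun
      (fun t ht => by simp only [abs_of_pos (mem_Ioi.mp ht)]) measurableSet_Ioi
  have hlocal : ∫ t in Ioc 0 D, decayProfile p q D t ≤
      ((1 + D) / 2) ^ (-p) * ((1 + D) ^ (1 - q) / (1 - q)) := by
    calc ∫ t in Ioc 0 D, decayProfile p q D t
        ≤ ∫ t in Ioc 0 D, ((1 + D) / 2) ^ (-p) * (1 + t) ^ (-q) := by
          refine setIntegral_mono_on (hint.mono_set Ioc_subset_Ioi_self) ?_ measurableSet_Ioc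
            fun t ht => decayProfile_le_of_nonneg hp hD ht.1.le
          exact (continuousOn_const.mul ((continuousOn_const.add continuousOn_id).rpow_const
            fun t ht => Or.inl (by linarith [ht.1] : (1 : ℝ) + t ≠ 0))).integrableOn_Icc
              |>.mono_set Ioc_subset_Icc_self
      _ ≤ _ := by
          rw [integral_const_mul]
          exact mul_le_mul_of_nonneg_left (integral_Ioc_one_add_rpow_neg_le hq hD)
            (rpow_nonneg (by linarith) _)
  have htail : ∫ t in Ioi D, decayProfile p q D t ≤ (1 + D) ^ (1 - (p + q)) / (p + q - 1) := by
    rw [← integral_Ioi_one_add_rpow_neg hpq (by linarith)]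
    refine setIntegral_mono_on (hint.mono_set (Ioi_subset_Ioi hD)) ?_ measurableSet_Ioi
      fun t ht => decayProfile_le_rpow hp (hD.trans (le_of_lt ht))
    exact (integrable_one_add_abs_rpow_neg hpq).integrableOn.congr_fun
      (fun t ht => by simp only [abs_of_pos (hD.trans_lt ht)]) measurableSet_Ioi
  have hlocal_eq : ((1 + D) / 2) ^ (-p) * ((1 + D) ^ (1 - q) / (1 - q)) =
      2 ^ p / (1 - q) / (1 + D) ^ (p + q - 1) := by
    rw [div_rpow hE.le zero_le_two, rpow_neg zero_le_two, div_inv_eq_mul, mul_comm _ (2 ^ p),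
      mul_assoc, ← mul_div_assoc, ← rpow_add hE, show -p + (1 - q) = -(p + q - 1) by ring,
      rpow_neg hE.le]
    ring
  have htail_eq : (1 + D) ^ (1 - (p + q)) / (p + q - 1) =
      1 / (p + q - 1) / (1 + D) ^ (p + q - 1) := by
    rw [show 1 - (p + q) = -(p + q - 1) by ring, rpow_neg hE.le]
    ring
  rw [integral_comp_abs (f := decayProfile p q D), ← Ioc_union_Ioi_eq_Ioi hD,
    setIntegral_union (Ioc_disjoint_Ioi le_rfl) measurableSet_Ioi
      (hint.mono_set Ioc_subset_Ioi_self) (hint.mono_set (Ioi_subset_Ioi hD)),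
    mul_div_assoc, add_div]
  linarith

end decayProfile

theorem integral_one_div_one_add_abs_rpow_mul_le {p q : ℝ} (hp : p < 1) (hq : q < 1)
    (hpq : 1 < p + q) (a c : ℝ) :
    ∫ x, 1 / ((1 + |x - a|) ^ p * (1 + |x - c|) ^ q) ≤
      (2 * (2 ^ p / (1 - q) + 1 / (p + q - 1)) + 2 * (2 ^ q / (1 - p) + 1 / (p + q - 1))) /
        (1 + |a - c|) ^ (p + q - 1) := by
  have hp0 : 0 ≤ p := by linarith
  have hq0 : 0 ≤ q := by linarith
  have hqp : 1 < q + p := by linarith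
  have hbound : ∀ x, 1 / ((1 + |x - a|) ^ p * (1 + |x - c|) ^ q) ≤
      decayProfile p q |a - c| |x - c| + decayProfile q p |a - c| |x - a| := fun x => by
    simpa [abs_sub_comm c a] using one_div_rpow_mul_rpow_le hp0 hq0 (x - a) (x - c)
  have hint_c := (integrable_decayProfile_abs |a - c| hp0 hpq).comp_sub_right c
  have hint_a := (integrable_decayProfile_abs |a - c| hq0 hqp).comp_sub_right a
  calc ∫ x, 1 / ((1 + |x - a|) ^ p * (1 + |x - c|) ^ q)
      ≤ ∫ x, (decayProfile p q |a - c| |x - c| + decayProfile q p |a - c| |x - a|) :=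
        integral_mono_of_nonneg (Filter.Eventually.of_forall fun x => by positivity)
          (hint_c.add hint_a) (Filter.Eventually.of_forall hbound)
    _ = (∫ x, decayProfile p q |a - c| |x|) + ∫ x, decayProfile q p |a - c| |x| := by
        rw [integral_add hint_c hint_a,
          integral_sub_right_eq_self (fun x => decayProfile p q |a - c| |x|),
          integral_sub_right_eq_self (fun x => decayProfile q p |a - c| |x|)]
    _ ≤ _ := by
        rw [add_div]
        gcongr
        · exact integral_decayProfile_abs_le hp0 hq hpq (abs_nonneg _)
        · rw [add_comm p q]
          exact integral_decayProfile_abs_le hq0 hp hqp (abs_nonneg _)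

theorem calc_est_6 (l l' : ℝ) (h1 : 1/4 < l') (h2 : l' ≤ l) (h3 : l < 1/2) :
    ∃ C : ℝ, ∀ a c : ℝ,
      (∫ x : ℝ, 1 / ((1 + |x - a|) ^ (2*l) * (1 + |x - c|) ^ (2*l'))) ≤
        C / (1 + |a - c|) ^ (2*l + 2*l' - 1) :=
  ⟨_, integral_one_div_one_add_abs_rpow_mul_le (by linarith) (by linarith) (by linarith)⟩
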